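/- arXiv:2308.10456 — 3 statements merged into one kernel-verified Lean document; each statement's English description precedes it below -/
import Mathlib

section
/- For D ∈ 𝔇_n, the set Σ_R(P_D) of linear extensions of the canonical poset P_D equals the image under the map f(γ) = w_0γ⁻¹ of the left weak Bruhat interval [read(T_source), read(T_sink)]_L, where T_source is the standard tableau filling D along rows left-to-right from the lowermost row and T_sink fills D along columns bottom-to-top from the leftmost column, and read reads entries along rows right to left starting with the lowermost row. -/
open Equiv

/-- Coxeter length of a permutation = number of inversions. -/
def len {n : ℕ} (σ : Perm (Fin n)) : ℕ :=
  (Finset.univ.filter fun p : Fin n × Fin n => p.1 < p.2 ∧ σ p.2 < σ p.1).card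

/-- The simple transposition `s_i = (i, i+1)` (0-indexed). -/
def simpleT {n : ℕ} (i : ℕ) (h : i + 1 < n) : Perm (Fin n) :=
  Equiv.swap ⟨i, Nat.lt_of_succ_lt h⟩ ⟨i + 1, h⟩

/-- Covering relation of the left weak Bruhat order. -/
def leftCov {n : ℕ} (σ τ : Perm (Fin n)) : Prop :=
  ∃ i, ∃ h : i + 1 < n, τ = simpleT i h * σ ∧ len σ < len τ

/-- The left weak Bruhat order. -/
def leftWeakLe {n : ℕ} : Perm (Fin n) → Perm (Fin n) → Prop :=
  Relation.ReflTransGen leftCov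

/-- The left weak Bruhat interval `[σ,ρ]_L`. -/
def leftInterval {n : ℕ} (σ ρ : Perm (Fin n)) : Set (Perm (Fin n)) :=
  {γ | leftWeakLe σ γ ∧ leftWeakLe γ ρ}

/-- Row-reading enumeration: rows top to bottom, within a row left to right. -/
def RowEnum {n : ℕ} (e : Fin n → ℕ × ℕ) : Prop :=
  ∀ i j : Fin n, i < j ↔ ((e j).2 < (e i).2 ∨ ((e i).2 = (e j).2 ∧ (e i).1 < (e j).1))

/-- Filling order of the sink standard tableau: columns left to right, within a
column bottom to top. -/
def ColEnum {n : ℕ} (t : Fin n → ℕ × ℕ) : Prop :=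
  ∀ i j : Fin n, i < j ↔ ((t i).1 < (t j).1 ∨ ((t i).1 = (t j).1 ∧ (t i).2 < (t j).2))

/-- Filling order of the source standard tableau: rows bottom to top, within a
row left to right. -/
def SrcEnum {n : ℕ} (u : Fin n → ℕ × ℕ) : Prop :=
  ∀ i j : Fin n, i < j ↔ ((u i).2 < (u j).2 ∨ ((u i).2 = (u j).2 ∧ (u i).1 < (u j).1))

/-- Reading order of `read`: rows bottom to top, within a row right to left. -/
def ReadEnum {n : ℕ} (r : Fin n → ℕ × ℕ) : Prop :=
  ∀ i j : Fin n, i < j ↔ ((r i).2 < (r j).2 ∨ ((r i).2 = (r j).2 ∧ (r j).1 < (r i).1))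

/-- Membership in `𝔇_n`: no empty rows or columns. -/
def DiagOK (D : Finset (ℕ × ℕ)) : Prop :=
  (∃ l, D.image Prod.fst = Finset.Icc 1 l) ∧ (∃ k, D.image Prod.snd = Finset.Icc 1 k)

/-- `Σ_R(P_D)` for the canonical poset `P_D` labeled via the row-reading
enumeration `e`. -/
def SigmaRD {n : ℕ} (e : Fin n → ℕ × ℕ) : Set (Perm (Fin n)) :=
  {γ | ∀ i j : Fin n,
    ((e i).1 ≤ (e j).1 ∧ (e i).2 ≤ (e j).2 ∧ i ≠ j) → γ⁻¹ i < γ⁻¹ j}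


/-! The left weak order is inclusion of inversion sets (taken on positions): a cover `σ ⋖ sᵢσ`
adds exactly one inversion, and conversely if `Inv σ ⊊ Inv τ` then a descent of `τσ⁻¹` yields a
cover of `σ` still below `τ`. The row-reading labelling is the reversed reading word, so `σ` is a
linear extension of `P_D` iff `γ = σ⁻¹ w₀` satisfies `γ p < γ q` whenever the cell read at `p`
lies weakly south-west of the one read at `q`. The inversions of `read(T_source)` are the pairs
read in the same row, those of `read(T_sink)` the pairs whose later cell lies strictly to the
left, and `γ` respects the cell order exactly when its inversion set lies between these two. -/

namespace Equiv.Perm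

variable {n : ℕ}

def invSet (σ : Perm (Fin n)) : Finset (Fin n × Fin n) :=
  Finset.univ.filter fun p => p.1 < p.2 ∧ σ p.2 < σ p.1

@[simp]
lemma mem_invSet {σ : Perm (Fin n)} {p : Fin n × Fin n} :
    p ∈ invSet σ ↔ p.1 < p.2 ∧ σ p.2 < σ p.1 := by
  simp [invSet]

lemma len_eq_card_invSet (σ : Perm (Fin n)) : len σ = (invSet σ).card := rfl

lemma swap_lt_swap_iff {a b x y : Fin n} (hab : (b : ℕ) = a + 1) :
    swap a b x < swap a b y ↔ (x < y ∧ ¬(x = a ∧ y = b)) ∨ (x = b ∧ y = a) := by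
  simp only [swap_apply_def, Fin.lt_def, Fin.ext_iff]
  split_ifs <;> omega

lemma invSet_swap_mul {a b : Fin n} (hab : (b : ℕ) = a + 1) {σ : Perm (Fin n)}
    (h : σ⁻¹ a < σ⁻¹ b) : invSet (swap a b * σ) = insert (σ⁻¹ a, σ⁻¹ b) (invSet σ) := by
  ext ⟨p, q⟩
  simp only [mem_invSet, Finset.mem_insert, Prod.mk.injEq, mul_apply, swap_lt_swap_iff hab,
    ← eq_inv_iff_eq]
  constructor
  · rintro ⟨hpq, ⟨hqp, -⟩ | ⟨rfl, rfl⟩⟩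
    · exact Or.inr ⟨hpq, hqp⟩
    · exact Or.inl ⟨rfl, rfl⟩
  · rintro (⟨rfl, rfl⟩ | ⟨hpq, hqp⟩)
    · exact ⟨h, Or.inr ⟨rfl, rfl⟩⟩
    · refine ⟨hpq, Or.inl ⟨hqp, ?_⟩⟩
      rintro ⟨rfl, rfl⟩
      exact h.not_gt hpq

lemma len_swap_mul {a b : Fin n} (hab : (b : ℕ) = a + 1) {σ : Perm (Fin n)}
    (h : σ⁻¹ a < σ⁻¹ b) : len (swap a b * σ) = len σ + 1 := by
  rw [len_eq_card_invSet, len_eq_card_invSet, invSet_swap_mul hab h,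
    Finset.card_insert_of_notMem]
  simp only [mem_invSet, coe_inv, apply_symm_apply, Fin.lt_def, hab]
  omega

lemma leftCov_swap_mul {a b : Fin n} (hab : (b : ℕ) = a + 1) {σ : Perm (Fin n)}
    (h : σ⁻¹ a < σ⁻¹ b) : leftCov σ (swap a b * σ) := by
  refine ⟨a, by omega, ?_, by rw [len_swap_mul hab h]; omega⟩
  rw [simpleT]
  congr 2
  exact Fin.ext hab

lemma invSet_subset_of_leftCov {σ τ : Perm (Fin n)} (hστ : leftCov σ τ) :
    invSet σ ⊆ invSet τ := by
  obtain ⟨i, hi, rfl, hlen⟩ := hστ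
  rw [simpleT] at hlen ⊢
  set a : Fin n := ⟨i, by omega⟩
  set b : Fin n := ⟨i + 1, hi⟩
  have hab : (b : ℕ) = a + 1 := rfl
  rcases lt_or_gt_of_ne (σ⁻¹.injective.ne (a₁ := a) (a₂ := b) (by simp [a, b, Fin.ext_iff]))
    with h | h
  · rw [invSet_swap_mul hab h]
    exact Finset.subset_insert _ _
  · -- `σ = s * (s * σ)`, so otherwise `s * σ` would be the shorter of the two
    have h' : (swap a b * σ)⁻¹ a < (swap a b * σ)⁻¹ b := by
      simpa [mul_inv_rev, swap_inv] using h
    have := len_swap_mul hab h'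
    rw [swap_mul_self_mul] at this
    omega

lemma exists_apply_succ_lt_of_ne_one {π : Perm (Fin n)} (hπ : π ≠ 1) :
    ∃ a b : Fin n, (b : ℕ) = a + 1 ∧ π b < π a := by
  obtain _ | m := n
  · exact absurd (Subsingleton.elim π 1) hπ
  by_contra! hmono
  have hπmono : StrictMono π := Fin.strictMono_iff_lt_succ.2 fun i =>
    (hmono i.castSucc i.succ (by simp)).lt_of_ne (π.injective.ne Fin.castSucc_lt_succ.ne)
  exact hπ (DFunLike.coe_injective ((hπmono.range_inj strictMono_id).1 (by simp)))

lemma exists_leftCov_invSet_subset {σ τ : Perm (Fin n)} (hsub : invSet σ ⊆ invSet τ)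
    (hne : σ ≠ τ) : ∃ σ', leftCov σ σ' ∧ invSet σ' ⊆ invSet τ := by
  obtain ⟨a, b, hab, hdesc⟩ := exists_apply_succ_lt_of_ne_one (π := τ * σ⁻¹)
    (mt mul_inv_eq_one.1 hne.symm)
  simp only [mul_apply] at hdesc
  have hlt : σ⁻¹ a < σ⁻¹ b := by
    refine lt_of_le_of_ne (not_lt.1 fun hba => ?_) (σ⁻¹.injective.ne ?_)
    · have hinv : (σ⁻¹ b, σ⁻¹ a) ∈ invSet σ := by
        simp only [mem_invSet, coe_inv, apply_symm_apply, Fin.lt_def, hab]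
        exact ⟨hba, by omega⟩
      exact (mem_invSet.1 (hsub hinv)).2.not_gt hdesc
    · rw [Ne, Fin.ext_iff, hab]
      omega
  refine ⟨swap a b * σ, leftCov_swap_mul hab hlt, ?_⟩
  rw [invSet_swap_mul hab hlt]
  exact Finset.insert_subset (mem_invSet.2 ⟨hlt, hdesc⟩) hsub

theorem leftWeakLe_iff_invSet_subset {σ τ : Perm (Fin n)} :
    leftWeakLe σ τ ↔ invSet σ ⊆ invSet τ := by
  refine ⟨fun h => ?_, fun h => ?_⟩
  · induction h with
    | refl => exact subset_rfl
    | tail _ hcov ih => exact ih.trans (invSet_subset_of_leftCov hcov)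
  · induction hk : len τ - len σ using Nat.strong_induction_on generalizing σ with
    | _ k ih =>
      obtain rfl | hne := eq_or_ne σ τ
      · exact Relation.ReflTransGen.refl
      obtain ⟨σ', hcov, hsub'⟩ := exists_leftCov_invSet_subset h hne
      have hlen : len σ < len σ' := by obtain ⟨_, _, _, h⟩ := hcov; exact h
      have hle : len σ' ≤ len τ := Finset.card_le_card hsub'
      exact .head hcov (ih _ (by omega) hsub' rfl)

end Equiv.Perm

section Enumerations

variable {n : ℕ}

def rowKey (c : ℕ × ℕ) : ℕᵒᵈ ×ₗ ℕ := toLex (OrderDual.toDual c.2, c.1)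

lemma rowKey_injective : Function.Injective rowKey := by
  intro c d h
  simpa [rowKey, Prod.ext_iff, and_comm] using h

lemma RowEnum.strictMono {e : Fin n → ℕ × ℕ} (he : RowEnum e) : StrictMono (rowKey ∘ e) :=
  fun i j hij => by simpa [rowKey, Prod.Lex.toLex_lt_toLex] using (he i j).1 hij

lemma RowEnum.eq_of_range_eq {e e' : Fin n → ℕ × ℕ} (he : RowEnum e) (he' : RowEnum e')
    (h : Set.range e = Set.range e') : e = e' :=
  rowKey_injective.comp_left <| (he.strictMono.range_inj he'.strictMono).1 <| by
    rw [Set.range_comp, Set.range_comp, h]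

lemma ReadEnum.rowEnum_comp_rev {r : Fin n → ℕ × ℕ} (hr : ReadEnum r) : RowEnum (r ∘ Fin.rev) :=
  fun i j => by
    rw [← Fin.rev_lt_rev, hr, Function.comp_apply, Function.comp_apply]
    omega

lemma ReadEnum.injective {r : Fin n → ℕ × ℕ} (hr : ReadEnum r) : Function.Injective r := by
  intro p q h
  rcases lt_trichotomy p q with hpq | rfl | hqp
  · have := (hr p q).1 hpq
    rw [h] at this
    omega
  · rfl
  · have := (hr q p).1 hqp
    rw [h] at this
    omega

lemma ReadEnum.mem_invSet_iff_of_srcEnum {r u : Fin n → ℕ × ℕ} (hr : ReadEnum r)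
    (hu : SrcEnum u) {w : Perm (Fin n)} (hw : ∀ p, u (w p) = r p) {p q : Fin n} (hpq : p < q) :
    (p, q) ∈ w.invSet ↔ (r p).2 = (r q).2 := by
  have := (hr p q).1 hpq
  rw [Perm.mem_invSet, hu (w q) (w p), hw, hw]
  simp only [hpq, true_and]
  omega

lemma ReadEnum.mem_invSet_iff_of_colEnum {r t : Fin n → ℕ × ℕ} (hr : ReadEnum r)
    (ht : ColEnum t) {w : Perm (Fin n)} (hw : ∀ p, t (w p) = r p) {p q : Fin n} (hpq : p < q) :
    (p, q) ∈ w.invSet ↔ (r q).1 < (r p).1 := by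
  have := (hr p q).1 hpq
  rw [Perm.mem_invSet, ht (w q) (w p), hw, hw]
  simp only [hpq, true_and]
  omega

end Enumerations

open Equiv.Perm in
lemma ReadEnum.forall_le_imp_lt_iff {n : ℕ} {r : Fin n → ℕ × ℕ} (hr : ReadEnum r)
    {wsrc wsink : Perm (Fin n)}
    (hsrc : ∀ p q, p < q → ((p, q) ∈ wsrc.invSet ↔ (r p).2 = (r q).2))
    (hsink : ∀ p q, p < q → ((p, q) ∈ wsink.invSet ↔ (r q).1 < (r p).1)) (γ : Perm (Fin n)) :
    (∀ p q, r p ≤ r q → p ≠ q → γ p < γ q) ↔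
      wsrc.invSet ⊆ γ.invSet ∧ γ.invSet ⊆ wsink.invSet := by
  refine ⟨fun hγ => ⟨?_, ?_⟩, fun ⟨hlow, hup⟩ p q hle hne => ?_⟩
  · rintro ⟨p, q⟩ hinv
    obtain ⟨hpq, -⟩ := mem_invSet.1 hinv
    have hrow := (hsrc p q hpq).1 hinv
    have := (hr p q).1 hpq
    exact mem_invSet.2 ⟨hpq, hγ q p (Prod.le_def.2 ⟨by omega, by omega⟩) hpq.ne'⟩
  · rintro ⟨p, q⟩ hmem
    obtain ⟨hpq, hinv⟩ := mem_invSet.1 hmem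
    refine (hsink p q hpq).2 (not_le.1 fun hcol => hinv.not_gt (hγ p q ?_ hpq.ne))
    have := (hr p q).1 hpq
    exact Prod.le_def.2 ⟨hcol, by omega⟩
  · obtain ⟨hcol, hrow⟩ := Prod.le_def.1 hle
    rcases hrow.eq_or_lt with hrow | hrow
    · -- same row: `q` is read before `p`, and the source word already inverts them
      have hqp : q < p := (hr q p).2 (Or.inr ⟨hrow.symm, ?_⟩)
      · exact (mem_invSet.1 (hlow ((hsrc q p hqp).2 hrow.symm))).2
      exact hcol.lt_of_ne fun hcol => hne (hr.injective (Prod.ext hcol hrow))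
    · have hpq : p < q := (hr p q).2 (Or.inl hrow)
      refine (γ.injective.ne hne).lt_or_gt.resolve_right fun hqp => ?_
      have := (hsink p q hpq).1 (hup (mem_invSet.2 ⟨hpq, hqp⟩))
      omega

lemma mem_sigmaRD_comp_rev {n : ℕ} {r : Fin n → ℕ × ℕ} {σ : Perm (Fin n)} :
    σ ∈ SigmaRD (r ∘ Fin.rev) ↔ ∀ p q, r p ≤ r q → p ≠ q → σ⁻¹ p.rev < σ⁻¹ q.rev := by
  refine ⟨fun hσ p q hle hne => ?_, fun hσ i j ⟨hcol, hrow, hne⟩ => ?_⟩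
  · refine hσ p.rev q.rev ⟨?_, ?_, Fin.rev_injective.ne hne⟩ <;>
      simp only [Function.comp_apply, Fin.rev_rev, (Prod.le_def.1 hle).1, (Prod.le_def.1 hle).2]
  · simpa using hσ i.rev j.rev (Prod.le_def.2 ⟨hcol, hrow⟩) (Fin.rev_injective.ne hne)

lemma mem_image_revPerm_mul_inv {n : ℕ} {S : Set (Perm (Fin n))} {σ : Perm (Fin n)} :
    σ ∈ (fun γ => Fin.revPerm * γ⁻¹) '' S ↔ σ⁻¹ * Fin.revPerm ∈ S := by
  refine ⟨?_, fun h => ⟨_, h, ?_⟩⟩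
  · rintro ⟨γ, hγ, rfl⟩
    simpa [mul_assoc] using hγ
  · simp [← mul_assoc]

theorem sigmaRD_eq_image_left_interval_general {n : ℕ} (D : Finset (ℕ × ℕ))
    (e u t r : Fin n → ℕ × ℕ)
    (he : RowEnum e) (hre : Set.range e = ↑D)
    (hu : SrcEnum u)
    (ht : ColEnum t)
    (hr : ReadEnum r) (hrr : Set.range r = ↑D)
    (wsrc : Perm (Fin n)) (hwsrc : ∀ p : Fin n, u (wsrc p) = r p)
    (wsink : Perm (Fin n)) (hwsink : ∀ p : Fin n, t (wsink p) = r p) :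
    SigmaRD e = (fun γ => Fin.revPerm * γ⁻¹) '' leftInterval wsrc wsink := by
  have he_eq : e = r ∘ Fin.rev :=
    he.eq_of_range_eq hr.rowEnum_comp_rev (by rw [hre, Fin.rev_surjective.range_comp, hrr])
  ext σ
  rw [he_eq, mem_sigmaRD_comp_rev, mem_image_revPerm_mul_inv, leftInterval, Set.mem_ofPred_eq,
    Perm.leftWeakLe_iff_invSet_subset, Perm.leftWeakLe_iff_invSet_subset]
  exact hr.forall_le_imp_lt_iff (fun _ _ => hr.mem_invSet_iff_of_srcEnum hu hwsrc)
    (fun _ _ => hr.mem_invSet_iff_of_colEnum ht hwsink) (σ⁻¹ * Fin.revPerm)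

/-- For `D ∈ 𝔇_n`:
`Σ_R(P_D) = { w₀ γ⁻¹ : γ ∈ [read(T_source(D)), read(T_sink(D))]_L }`, where
`wsrc = read(T_source(D))` and `wsink = read(T_sink(D))` are the reading words of
the source and sink standard tableaux of `D`. -/
theorem sigmaRD_eq_image_left_interval {n : ℕ} (D : Finset (ℕ × ℕ))
    (hcard : D.card = n) (hD : DiagOK D)
    (e u t r : Fin n → ℕ × ℕ)
    (he : RowEnum e) (hre : Set.range e = ↑D)
    (hu : SrcEnum u) (hru : Set.range u = ↑D)
    (ht : ColEnum t) (hrt : Set.range t = ↑D)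
    (hr : ReadEnum r) (hrr : Set.range r = ↑D)
    (wsrc : Perm (Fin n)) (hwsrc : ∀ p : Fin n, u (wsrc p) = r p)
    (wsink : Perm (Fin n)) (hwsink : ∀ p : Fin n, t (wsink p) = r p) :
    SigmaRD e = (fun γ => Fin.revPerm * γ⁻¹) '' leftInterval wsrc wsink :=
  sigmaRD_eq_image_left_interval_general D e u t r he hre hu ht hr hrr wsrc hwsrc wsink hwsink
end

section
/- Let α be a composition of n, τ a standard reverse composition tableau of shape α, and let τ̇ = S(τ) be the filling produced by the paper's sink algorithm. Then τ̇ is a standard reverse composition tableau of shape α, is equivalent to τ (same standardized column words in every column), and is a sink tableau: every descent of τ̇ is attacking. -/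
/-- The composition diagram `cd(α)`: boxes `(i,j)` (row `i` from the top, column
`j` from the left) with `1 ≤ i ≤ ℓ(α)` and `1 ≤ j ≤ αᵢ`. -/
def cdFinset (α : List ℕ) : Finset (ℕ × ℕ) :=
  (Finset.range α.length).biUnion fun i =>
    (Finset.Icc 1 (α.getD i 0)).image fun j => (i + 1, j)

/-- The defining conditions of a standard reverse composition tableau of shape
`α` (besides being a bijective filling by `1,…,n`): rows strictly decrease left
to right, the first column strictly increases top to bottom, and the triple
condition holds. -/
def IsSRCT (α : List ℕ) (τ : ℕ × ℕ → ℕ) : Prop :=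
  (∀ i j : ℕ, (i, j) ∈ cdFinset α → (i, j + 1) ∈ cdFinset α →
    τ (i, j + 1) < τ (i, j)) ∧
  (∀ i i' : ℕ, i < i' → (i, 1) ∈ cdFinset α → (i', 1) ∈ cdFinset α →
    τ (i, 1) < τ (i', 1)) ∧
  (∀ i j k : ℕ, i < j → (i, k) ∈ cdFinset α → (j, k + 1) ∈ cdFinset α →
    τ (j, k + 1) < τ (i, k) →
    ((i, k + 1) ∈ cdFinset α ∧ τ (j, k + 1) < τ (i, k + 1)))

/-- `τ` is a sink tableau: every descent is attacking.  A value `m` is a descent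
when `m+1` sits weakly right of `m`; it is attacking if `m` and `m+1` are in the
same column or in adjacent columns with `m+1` lower-right of `m`. -/
def IsSinkSRCT (α : List ℕ) (τ : ℕ × ℕ → ℕ) : Prop :=
  ∀ b b' : ℕ × ℕ, b ∈ cdFinset α → b' ∈ cdFinset α →
    τ b' = τ b + 1 → b.2 ≤ b'.2 →
    (b'.2 = b.2 ∨ (b'.2 = b.2 + 1 ∧ b.1 < b'.1))

/-- First element of a chain: the box of greatest entry in the leftmost column
containing an available box. -/
def ChainStart (A : Set (ℕ × ℕ)) (τ : ℕ × ℕ → ℕ) (b : ℕ × ℕ) : Prop :=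
  b ∈ A ∧ (∀ c ∈ A, b.2 ≤ c.2) ∧ (∀ c ∈ A, c.2 = b.2 → τ c ≤ τ b)

/-- Chain step: if the next column contains an available entry greater than the
current one and placed below it, move to the box of greatest available entry in
that column. -/
def ChainStep (A : Set (ℕ × ℕ)) (τ : ℕ × ℕ → ℕ) (b b' : ℕ × ℕ) : Prop :=
  b' ∈ A ∧ b'.2 = b.2 + 1 ∧ (∀ c ∈ A, c.2 = b.2 + 1 → τ c ≤ τ b') ∧
  (∃ c ∈ A, c.2 = b.2 + 1 ∧ τ b < τ c ∧ b.1 < c.1)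

/-- Chain termination: no available entry in the next column is greater than the
current entry and placed below it. -/
def ChainEnd (A : Set (ℕ × ℕ)) (τ : ℕ × ℕ → ℕ) (b : ℕ × ℕ) : Prop :=
  ¬ ∃ c ∈ A, c.2 = b.2 + 1 ∧ τ b < τ c ∧ b.1 < c.1

/-- A maximal greedy chain (the sequence `a₁,…,a_l` of the algorithm). -/
def IsGreedyChain (A : Set (ℕ × ℕ)) (τ : ℕ × ℕ → ℕ) (ch : List (ℕ × ℕ)) : Prop :=
  ch ≠ [] ∧
  (∀ h : ch ≠ [], ChainStart A τ (ch.head h)) ∧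
  (∀ k, ∀ h : k + 1 < ch.length,
    ChainStep A τ (ch.get ⟨k, Nat.lt_of_succ_lt h⟩) (ch.get ⟨k + 1, h⟩)) ∧
  (∀ h : ch ≠ [], ChainEnd A τ (ch.getLast h))

/-- The boxes still available at stage `m` (positions of entries `> m` have been
starred out). -/
def availOf (α : List ℕ) {n : ℕ} (pos : Fin n → ℕ × ℕ) (m : Fin n) : Set (ℕ × ℕ) :=
  {p | p ∈ cdFinset α ∧ ∀ m' : Fin n, m < m' → pos m' ≠ p}

/-- The sink algorithm: `τ'` is obtained from `τ` by placing `n` at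
`(ℓ(α), 1)` and, for `m = n-1, …, 1`, placing `m` at the last box of the maximal
greedy chain through `τ` restricted to the still-available boxes. -/
def SinkAlgo (α : List ℕ) (n : ℕ) (τ τ' : ℕ × ℕ → ℕ) : Prop :=
  (∀ p, p ∉ cdFinset α → τ' p = 0) ∧
  ∃ pos : Fin n → ℕ × ℕ,
    Function.Injective pos ∧
    (∀ m, pos m ∈ cdFinset α) ∧
    (∀ m : Fin n, τ' (pos m) = (m : ℕ) + 1) ∧
    (∀ hn : 0 < n, pos ⟨n - 1, by omega⟩ = (α.length, 1)) ∧
    (∀ m : Fin n, (m : ℕ) + 1 < n →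
      ∃ ch : List (ℕ × ℕ), IsGreedyChain (availOf α pos m) τ ch ∧
        ch.getLast? = some (pos m))

/-!
Write `pos m` for the box that receives the value `m + 1`.  A greedy chain moves through
column maxima along increasing entries, so when `m + 1` is placed, its box carries the largest
`τ`-entry among the still-available boxes in all columns up to its own, and (since the chain
stopped there) no available box in the next column and a lower row has a larger entry.
All boxes of smaller values are still available at that stage.  Hence comparisons inside a
column are the same for `τ` and `τ̇`, and the row and triple conditions are inherited from `τ`.
If `m + 1` lies strictly right of `m`, the chain placing `m + 1` must pass through the box of
`m` (it is the maximum of its column once `m + 1`'s box is removed), and its next step can only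
be the box of `m + 1`, which is therefore in the adjacent column and a lower row.
-/

theorem sum_range_getD_eq_sum (l : List ℕ) :
    ∑ i ∈ Finset.range l.length, l.getD i 0 = l.sum := by
  induction l with
  | nil => simp
  | cons a t ih =>
    rw [List.length_cons, Finset.sum_range_succ', List.sum_cons, ← ih, add_comm]
    rfl

theorem card_cdFinset (α : List ℕ) : (cdFinset α).card = α.sum := by
  rw [cdFinset, Finset.card_biUnion, ← sum_range_getD_eq_sum]
  · refine Finset.sum_congr rfl fun i _ => ?_
    rw [Finset.card_image_of_injective _ fun a b hab => (Prod.mk.inj hab).2, Nat.card_Icc,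
      Nat.add_sub_cancel]
  · intro i _ j _ hij
    simp only [Function.onFun, Finset.disjoint_left, Finset.mem_image]
    rintro _ ⟨a, -, rfl⟩ ⟨b, -, hb⟩
    exact hij (Nat.succ_injective (Prod.mk.inj hb).1).symm

theorem fst_le_length_and_one_le_snd_of_mem_cdFinset {α : List ℕ} {p : ℕ × ℕ}
    (hp : p ∈ cdFinset α) : p.1 ≤ α.length ∧ 1 ≤ p.2 := by
  simp only [cdFinset, Finset.mem_biUnion, Finset.mem_range, Finset.mem_image,
    Finset.mem_Icc] at hp
  obtain ⟨i, hi, j, hj, rfl⟩ := hp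
  exact ⟨hi, hj.1⟩

theorem IsSRCT.le_of_snd_le_one {α : List ℕ} {τ : ℕ × ℕ → ℕ} (hτ : IsSRCT α τ)
    {c : ℕ × ℕ} (hc : c ∈ cdFinset α) (hc1 : c.2 ≤ 1) (hcorner : (α.length, 1) ∈ cdFinset α) :
    τ c ≤ τ (α.length, 1) := by
  obtain ⟨hrow, hc2⟩ := fst_le_length_and_one_le_snd_of_mem_cdFinset hc
  obtain ⟨i, j⟩ := c
  obtain rfl : j = 1 := le_antisymm hc1 hc2
  rcases hrow.eq_or_lt with rfl | hlt
  · exact le_rfl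
  · exact (hτ.2.1 i _ hlt hc hcorner).le

theorem ChainStep.lt {A : Set (ℕ × ℕ)} {τ : ℕ × ℕ → ℕ} {b b' : ℕ × ℕ}
    (h : ChainStep A τ b b') : τ b < τ b' := by
  obtain ⟨-, -, hmax, c, hc, hcol, hlt, -⟩ := h
  exact hlt.trans_le (hmax c hc hcol)

namespace IsGreedyChain

variable {A : Set (ℕ × ℕ)} {τ : ℕ × ℕ → ℕ} {ch : List (ℕ × ℕ)}

theorem getElem_mem_and_le (hch : IsGreedyChain A τ ch) (k : ℕ) (hk : k < ch.length) :
    ch[k] ∈ A ∧ ∀ c ∈ A, c.2 = ch[k].2 → τ c ≤ τ ch[k] := by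
  cases k with
  | zero =>
    have hstart := hch.2.1 hch.1
    rw [← List.head_eq_getElem hch.1]
    exact ⟨hstart.1, hstart.2.2⟩
  | succ k =>
    obtain ⟨hmem, hcol, hmax, -⟩ := hch.2.2.1 k hk
    exact ⟨hmem, fun c hc hc' => hmax c hc (hc'.trans hcol)⟩

theorem head_snd_le (hch : IsGreedyChain A τ ch) (hk : 0 < ch.length) {c : ℕ × ℕ}
    (hc : c ∈ A) : ch[0].2 ≤ c.2 := by
  rw [← List.head_eq_getElem hch.1]
  exact (hch.2.1 hch.1).2.1 c hc

theorem le_getElem_of_snd_le (hch : IsGreedyChain A τ ch) (k : ℕ) (hk : k < ch.length)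
    {c : ℕ × ℕ} (hc : c ∈ A) (hcol : c.2 ≤ ch[k].2) : τ c ≤ τ ch[k] := by
  induction k with
  | zero => exact (hch.getElem_mem_and_le 0 hk).2 c hc (hcol.antisymm (hch.head_snd_le hk hc))
  | succ k ih =>
    have hstep : ChainStep A τ ch[k] ch[k + 1] := hch.2.2.1 k hk
    rcases hcol.eq_or_lt with heq | hlt
    · exact (hch.getElem_mem_and_le _ hk).2 c hc heq
    · exact (ih (by omega) (by have := hstep.2.1; omega)).trans hstep.lt.le

theorem exists_not_chainEnd_of_snd_lt (hch : IsGreedyChain A τ ch) (k : ℕ) (hk : k < ch.length)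
    {b : ℕ × ℕ} (hb : b ∈ A) (hlt : b.2 < ch[k].2) :
    ∃ a ∈ A, a.2 = b.2 ∧ τ b ≤ τ a ∧ ¬ ChainEnd A τ a := by
  induction k with
  | zero => exact absurd (hch.head_snd_le hk hb) hlt.not_ge
  | succ k ih =>
    have hstep : ChainStep A τ ch[k] ch[k + 1] := hch.2.2.1 k hk
    rcases (Nat.lt_succ_iff.1 (hstep.2.1 ▸ hlt)).eq_or_lt with heq | hlt'
    · obtain ⟨ha, hmax⟩ := hch.getElem_mem_and_le k (by omega)
      exact ⟨ch[k], ha, heq.symm, hmax b hb heq, not_not.2 hstep.2.2.2⟩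
    · exact ih (by omega) hlt'

theorem le_of_getLast?_eq (hch : IsGreedyChain A τ ch) {p : ℕ × ℕ} (hp : ch.getLast? = some p)
    {c : ℕ × ℕ} (hc : c ∈ A) (hcol : c.2 ≤ p.2) : τ c ≤ τ p := by
  rw [← List.getLast_of_getLast?_eq_some hp, List.getLast_eq_getElem] at hcol ⊢
  exact hch.le_getElem_of_snd_le _ _ hc hcol

theorem exists_not_chainEnd_of_lt_getLast?
    (hch : IsGreedyChain A τ ch) {p : ℕ × ℕ} (hp : ch.getLast? = some p)
    {b : ℕ × ℕ} (hb : b ∈ A) (hlt : b.2 < p.2) :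
    ∃ a ∈ A, a.2 = b.2 ∧ τ b ≤ τ a ∧ ¬ ChainEnd A τ a := by
  rw [← List.getLast_of_getLast?_eq_some hp, List.getLast_eq_getElem] at hlt
  exact hch.exists_not_chainEnd_of_snd_lt _ _ hb hlt

theorem chainEnd_of_getLast?_eq (hch : IsGreedyChain A τ ch) {p : ℕ × ℕ}
    (hp : ch.getLast? = some p) : ChainEnd A τ p :=
  List.getLast_of_getLast?_eq_some hp ▸ hch.2.2.2 hch.1

end IsGreedyChain

section availOf

variable {α : List ℕ} {n : ℕ} {pos : Fin n → ℕ × ℕ}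

theorem pos_mem_availOf (hinj : Function.Injective pos) (hmem : ∀ m, pos m ∈ cdFinset α)
    {a m : Fin n} (ham : a ≤ m) : pos a ∈ availOf α pos m :=
  ⟨hmem a, fun _ hm' he => (ham.trans_lt hm').ne (hinj he).symm⟩

theorem mem_availOf_of_val_eq_succ {m m' : Fin n} (hm' : (m' : ℕ) = m + 1) {p : ℕ × ℕ}
    (hp : p ∈ availOf α pos m') (hne : p ≠ pos m') : p ∈ availOf α pos m := by
  refine ⟨hp.1, fun k hk he => ?_⟩
  rcases (show m' ≤ k by rw [Fin.le_def, hm']; exact hk).eq_or_lt with rfl | hlt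
  · exact hne he.symm
  · exact hp.2 k hlt he

end availOf

structure IsSinkPlacement (α : List ℕ) (n : ℕ) (τ : ℕ × ℕ → ℕ) (pos : Fin n → ℕ × ℕ) :
    Prop where
  injective : Function.Injective pos
  mem : ∀ m, pos m ∈ cdFinset α
  last : ∀ hn : 0 < n, pos ⟨n - 1, by omega⟩ = (α.length, 1)
  chain : ∀ m : Fin n, (m : ℕ) + 1 < n →
    ∃ ch : List (ℕ × ℕ), IsGreedyChain (availOf α pos m) τ ch ∧ ch.getLast? = some (pos m)

theorem SinkAlgo.exists_isSinkPlacement {α : List ℕ} {n : ℕ} {τ τ' : ℕ × ℕ → ℕ}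
    (h : SinkAlgo α n τ τ') :
    ∃ pos, IsSinkPlacement α n τ pos ∧ ∀ m : Fin n, τ' (pos m) = (m : ℕ) + 1 := by
  obtain ⟨-, pos, hinj, hmem, hval, hlast, hchain⟩ := h
  exact ⟨pos, ⟨hinj, hmem, hlast, hchain⟩, hval⟩

namespace IsSinkPlacement

variable {α : List ℕ} {n : ℕ} {τ τ' : ℕ × ℕ → ℕ} {pos : Fin n → ℕ × ℕ}

theorem exists_pos_eq (hP : IsSinkPlacement α n τ pos) (hcard : (cdFinset α).card = n)
    {p : ℕ × ℕ} (hp : p ∈ cdFinset α) : ∃ m, pos m = p := by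
  obtain ⟨m, -, hm⟩ := Finset.surj_on_of_inj_on_of_card_le (s := Finset.univ) (fun m _ => pos m)
    (fun m _ => hP.mem m) (fun _ _ _ _ h => hP.injective h) (by simp [hcard]) p hp
  exact ⟨m, hm.symm⟩

theorem pos_eq_of_not_lt (hP : IsSinkPlacement α n τ pos) {m : Fin n} (hm : ¬ (m : ℕ) + 1 < n) :
    pos m = (α.length, 1) := by
  have hn : 0 < n := m.pos
  rw [show m = ⟨n - 1, by omega⟩ from Fin.ext (by dsimp only; omega)]
  exact hP.last hn

theorem le_of_snd_le (hP : IsSinkPlacement α n τ pos) (hτ : IsSRCT α τ) (m : Fin n)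
    {c : ℕ × ℕ} (hc : c ∈ availOf α pos m) (hcol : c.2 ≤ (pos m).2) : τ c ≤ τ (pos m) := by
  by_cases hm : (m : ℕ) + 1 < n
  · obtain ⟨ch, hch, hlast⟩ := hP.chain m hm
    exact hch.le_of_getLast?_eq hlast hc hcol
  · have hcorner := hP.pos_eq_of_not_lt hm
    rw [hcorner] at hcol ⊢
    exact hτ.le_of_snd_le_one hc.1 hcol (hcorner ▸ hP.mem m)

theorem le_of_snd_eq_succ (hP : IsSinkPlacement α n τ pos) (m : Fin n)
    {c : ℕ × ℕ} (hc : c ∈ availOf α pos m) (hcol : c.2 = (pos m).2 + 1)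
    (hrow : (pos m).1 < c.1) : τ c ≤ τ (pos m) := by
  by_cases hm : (m : ℕ) + 1 < n
  · obtain ⟨ch, hch, hlast⟩ := hP.chain m hm
    exact not_lt.1 fun hlt => hch.chainEnd_of_getLast?_eq hlast ⟨c, hc, hcol, hlt, hrow⟩
  · have := (fst_le_length_and_one_le_snd_of_mem_cdFinset hc.1).1
    rw [hP.pos_eq_of_not_lt hm] at hrow
    omega

theorem lt_of_lt_of_snd_eq (hP : IsSinkPlacement α n τ pos) (hτ : IsSRCT α τ)
    (hτinj : Set.InjOn τ (cdFinset α)) {a m : Fin n} (ham : a < m)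
    (hcol : (pos a).2 = (pos m).2) : τ (pos a) < τ (pos m) :=
  (hP.le_of_snd_le hτ m (pos_mem_availOf hP.injective hP.mem ham.le) hcol.le).lt_of_ne
    fun h => ham.ne (hP.injective (hτinj (hP.mem a) (hP.mem m) h))

theorem attacking_of_val_eq_succ (hP : IsSinkPlacement α n τ pos) (hτ : IsSRCT α τ)
    (hτinj : Set.InjOn τ (cdFinset α)) {m m' : Fin n} (hm' : (m' : ℕ) = m + 1)
    (hcol : (pos m).2 ≤ (pos m').2) :
    (pos m').2 = (pos m).2 ∨ ((pos m').2 = (pos m).2 + 1 ∧ (pos m).1 < (pos m').1) := by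
  by_cases hlast : (m' : ℕ) + 1 < n
  swap
  · have := (fst_le_length_and_one_le_snd_of_mem_cdFinset (hP.mem m)).2
    rw [hP.pos_eq_of_not_lt hlast] at hcol ⊢
    exact Or.inl (by dsimp only at hcol ⊢; omega)
  rcases hcol.eq_or_lt with heq | hlt
  · exact Or.inl heq.symm
  right
  obtain ⟨ch, hch, hend⟩ := hP.chain m' hlast
  have hb : pos m ∈ availOf α pos m' := pos_mem_availOf hP.injective hP.mem (by omega)
  obtain ⟨a, ha, hacol, hba, hstep⟩ := hch.exists_not_chainEnd_of_lt_getLast? hend hb hlt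
  have ha' : a ∈ availOf α pos m := mem_availOf_of_val_eq_succ hm' ha (by rintro rfl; omega)
  obtain rfl : a = pos m :=
    hτinj ha'.1 hb.1 ((hP.le_of_snd_le hτ m ha' hacol.le).antisymm hba)
  obtain ⟨c, hc, hccol, hlt, hrow⟩ := not_not.1 hstep
  -- The step out of `pos m` lands on a box that is not available at stage `m`: that of `m + 1`.
  by_cases hcm' : c = pos m'
  · exact hcm' ▸ ⟨hccol, hrow⟩
  · exact absurd (hP.le_of_snd_eq_succ m (mem_availOf_of_val_eq_succ hm' hc hcm') hccol hrow)
      hlt.not_ge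

theorem bijOn (hP : IsSinkPlacement α n τ pos) (hcard : (cdFinset α).card = n)
    (hval : ∀ m : Fin n, τ' (pos m) = (m : ℕ) + 1) :
    Set.BijOn τ' (cdFinset α) (Set.Icc 1 n) := by
  refine ⟨?_, ?_, fun v hv => ?_⟩
  · intro p hp
    obtain ⟨m, rfl⟩ := hP.exists_pos_eq hcard hp
    simp only [Set.mem_Icc, hval]
    omega
  · intro p hp q hq he
    obtain ⟨a, rfl⟩ := hP.exists_pos_eq hcard hp
    obtain ⟨b, rfl⟩ := hP.exists_pos_eq hcard hq
    rw [hval, hval] at he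
    rw [Fin.ext (Nat.succ_injective he)]
  · obtain ⟨h1, h2⟩ := hv
    exact ⟨pos ⟨v - 1, by omega⟩, hP.mem _, by rw [hval]; dsimp only; omega⟩

theorem lt_iff_lt (hP : IsSinkPlacement α n τ pos) (hτ : IsSRCT α τ)
    (hτinj : Set.InjOn τ (cdFinset α)) (hcard : (cdFinset α).card = n)
    (hval : ∀ m : Fin n, τ' (pos m) = (m : ℕ) + 1) {b b' : ℕ × ℕ} (hb : b ∈ cdFinset α)
    (hb' : b' ∈ cdFinset α) (hcol : b.2 = b'.2) : τ b < τ b' ↔ τ' b < τ' b' := by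
  obtain ⟨a, rfl⟩ := hP.exists_pos_eq hcard hb
  obtain ⟨c, rfl⟩ := hP.exists_pos_eq hcard hb'
  rw [hval, hval, Nat.add_lt_add_iff_right, ← Fin.lt_def]
  refine ⟨fun h => ?_, fun h => hP.lt_of_lt_of_snd_eq hτ hτinj h hcol⟩
  by_contra hac
  rcases (not_lt.1 hac).eq_or_lt with rfl | hca
  · exact h.false
  · exact (hP.lt_of_lt_of_snd_eq hτ hτinj hca hcol.symm).asymm h

theorem isSRCT (hP : IsSinkPlacement α n τ pos) (hτ : IsSRCT α τ)
    (hτinj : Set.InjOn τ (cdFinset α)) (hcard : (cdFinset α).card = n)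
    (hval : ∀ m : Fin n, τ' (pos m) = (m : ℕ) + 1) : IsSRCT α τ' := by
  refine ⟨fun i j h h' => ?_, fun i i' hii' h h' => ?_, fun i j k hij h h' hlt => ?_⟩
  · obtain ⟨a, ha⟩ := hP.exists_pos_eq hcard h
    obtain ⟨c, hc⟩ := hP.exists_pos_eq hcard h'
    rw [← ha, ← hc, hval, hval, Nat.add_lt_add_iff_right, ← Fin.lt_def, ← not_le]
    intro hac
    have hle := hP.le_of_snd_le hτ c (pos_mem_availOf hP.injective hP.mem hac)
      (by rw [ha, hc]; exact Nat.le_succ j)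
    rw [ha, hc] at hle
    exact (hτ.1 i j h h').not_ge hle
  · exact (hP.lt_iff_lt hτ hτinj hcard hval h h' rfl).1 (hτ.2.1 i i' hii' h h')
  · obtain ⟨M, hM⟩ := hP.exists_pos_eq hcard h
    obtain ⟨m, hm⟩ := hP.exists_pos_eq hcard h'
    rw [← hM, ← hm, hval, hval, Nat.add_lt_add_iff_right, ← Fin.lt_def] at hlt
    have hle := hP.le_of_snd_eq_succ M (pos_mem_availOf hP.injective hP.mem hlt.le)
      (by rw [hM, hm]) (by rw [hM, hm]; exact hij)
    rw [hM, hm] at hle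
    have hne : τ (j, k + 1) ≠ τ (i, k) := fun he => by
      simpa using congrArg Prod.snd (hτinj h' h he)
    obtain ⟨h'', hlt''⟩ := hτ.2.2 i j k hij h h' (hle.lt_of_ne hne)
    exact ⟨h'', (hP.lt_iff_lt hτ hτinj hcard hval h' h'' rfl).1 hlt''⟩

theorem isSinkSRCT (hP : IsSinkPlacement α n τ pos) (hτ : IsSRCT α τ)
    (hτinj : Set.InjOn τ (cdFinset α)) (hcard : (cdFinset α).card = n)
    (hval : ∀ m : Fin n, τ' (pos m) = (m : ℕ) + 1) : IsSinkSRCT α τ' := by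
  intro b b' hb hb' hsucc hcol
  obtain ⟨m, rfl⟩ := hP.exists_pos_eq hcard hb
  obtain ⟨m', rfl⟩ := hP.exists_pos_eq hcard hb'
  rw [hval, hval, Nat.succ_inj] at hsucc
  exact hP.attacking_of_val_eq_succ hτ hτinj hsucc hcol

end IsSinkPlacement

theorem sink_algorithm_correct_general (α : List ℕ) (n : ℕ)
    (hn : α.sum = n)
    (τ : ℕ × ℕ → ℕ) (hbij : Set.BijOn τ ↑(cdFinset α) (Set.Icc 1 n))
    (hτ : IsSRCT α τ)
    (τ' : ℕ × ℕ → ℕ) (halg : SinkAlgo α n τ τ') :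
    Set.BijOn τ' ↑(cdFinset α) (Set.Icc 1 n) ∧
    IsSRCT α τ' ∧
    (∀ b b' : ℕ × ℕ, b ∈ cdFinset α → b' ∈ cdFinset α → b.2 = b'.2 →
      (τ b < τ b' ↔ τ' b < τ' b')) ∧
    IsSinkSRCT α τ' := by
  obtain ⟨pos, hP, hval⟩ := halg.exists_isSinkPlacement
  have hcard : (cdFinset α).card = n := (card_cdFinset α).trans hn
  have hτinj : Set.InjOn τ (cdFinset α) := hbij.injOn
  exact ⟨hP.bijOn hcard hval, hP.isSRCT hτ hτinj hcard hval,
    fun _ _ hb hb' hcol => hP.lt_iff_lt hτ hτinj hcard hval hb hb' hcol,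
    hP.isSinkSRCT hτ hτinj hcard hval⟩

/-- The output `τ̇` of the sink algorithm applied to an SRCT `τ` of shape `α` is
an SRCT of shape `α`, is equivalent to `τ` (same standardized column words,
i.e. the same relative order within every column), and is a sink tableau. -/
theorem sink_algorithm_correct (α : List ℕ) (n : ℕ)
    (hα : ∀ x ∈ α, 0 < x) (hn : α.sum = n)
    (τ : ℕ × ℕ → ℕ) (hbij : Set.BijOn τ ↑(cdFinset α) (Set.Icc 1 n))
    (hτ : IsSRCT α τ)
    (τ' : ℕ × ℕ → ℕ) (halg : SinkAlgo α n τ τ') :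
    Set.BijOn τ' ↑(cdFinset α) (Set.Icc 1 n) ∧
    IsSRCT α τ' ∧
    (∀ b b' : ℕ × ℕ, b ∈ cdFinset α → b' ∈ cdFinset α → b.2 = b'.2 →
      (τ b < τ b' ↔ τ' b < τ' b')) ∧
    IsSinkSRCT α τ' :=
  sink_algorithm_correct_general α n hn τ hbij hτ τ' halg
end

section
/- Let s, m be positive integers and α a composition of ms. Then all border strip tableaux in BST_{𝔘_α}((s^m)) (the dual-immaculate border strip tableaux of shape α and type (s,...,s)) have the same height parity; consequently d_{α,(s^m)} = ε · |BST_{𝔘_α}((s^m))|, where ε = (−1)^{ht(T)} for any T in the set. -/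
/-- A border strip in `cd(α)` for the dual immaculate case: a connected skew
diagram that is a horizontal strip (a contiguous segment of one row), or a
union of connected horizontal strips each intersecting the first column
(left-justified contiguous row segments in a set of consecutive rows). -/
def IsBorderStripDIF (α : List ℕ) (B : Finset (ℕ × ℕ)) : Prop :=
  B ⊆ cdFinset α ∧ B.Nonempty ∧
  ((∃ i a b : ℕ, B = (Finset.Icc a b).image fun j => (i, j)) ∨
   (∃ i₁ i₂ : ℕ, i₁ ≤ i₂ ∧ (∀ p ∈ B, i₁ ≤ p.1 ∧ p.1 ≤ i₂) ∧
     (∀ i, i₁ ≤ i → i ≤ i₂ → (i, 1) ∈ B) ∧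
     (∀ p ∈ B, ∀ j, 1 ≤ j → j ≤ p.2 → (p.1, j) ∈ B)))

/-- A border strip tableau (dual immaculate case) of shape `α` and type
`(s,…,s)` (`m` parts): entries weakly increase along rows and down the first
column, each value `v ∈ {1,…,m}` occupies `s` boxes forming a border strip.
(The filling is normalized to be `0` off the diagram.) -/
def IsBSTDIF (α : List ℕ) (m s : ℕ) (T : ℕ × ℕ → ℕ) : Prop :=
  (∀ p ∈ cdFinset α, 1 ≤ T p ∧ T p ≤ m) ∧
  (∀ p, p ∉ cdFinset α → T p = 0) ∧
  (∀ i j : ℕ, (i, j) ∈ cdFinset α → (i, j + 1) ∈ cdFinset α → T (i, j) ≤ T (i, j + 1)) ∧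
  (∀ i i' : ℕ, i ≤ i' → (i, 1) ∈ cdFinset α → (i', 1) ∈ cdFinset α →
    T (i, 1) ≤ T (i', 1)) ∧
  (∀ v, 1 ≤ v → v ≤ m →
    ((cdFinset α).filter fun p => T p = v).card = s ∧
    IsBorderStripDIF α ((cdFinset α).filter fun p => T p = v))

/-- The height of a border strip tableau: the sum over its strips of (number of
rows of the strip minus one). -/
def htBSTDIF (α : List ℕ) (m : ℕ) (T : ℕ × ℕ → ℕ) : ℕ :=
  ∑ v ∈ Finset.Icc 1 m,
    (((((cdFinset α).filter fun p => T p = v)).image Prod.fst).card - 1)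

lemma mem_cdFinset (α : List ℕ) (i j : ℕ) :
    (i, j) ∈ cdFinset α ↔ 1 ≤ i ∧ i ≤ α.length ∧ 1 ≤ j ∧ j ≤ α.getD (i-1) 0 := by
  simp only [cdFinset, Finset.mem_biUnion, Finset.mem_range, Finset.mem_image, Finset.mem_Icc,
    Prod.mk.injEq]
  constructor
  · rintro ⟨i', hi', j', ⟨h1, h2⟩, rfl, rfl⟩
    simp only [Nat.add_sub_cancel]
    omega
  · rintro ⟨h1, h2, h3, h4⟩
    exact ⟨i - 1, by omega, j, ⟨h3, h4⟩, by omega, rfl⟩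

/-- canonical prefix length of row `r` (1-indexed). -/
def cFun (α : List ℕ) (s r : ℕ) : ℕ :=
  if α.getD (r-1) 0 % s = 0 then s else α.getD (r-1) 0 % s

/-- canonical set of block-end rows. -/
def cutSet (α : List ℕ) (s : ℕ) : Finset ℕ :=
  (Finset.Icc 1 α.length).filter fun r => s ∣ ∑ i ∈ Finset.Icc 1 r, cFun α s i

lemma cFun_pos (α : List ℕ) (s : ℕ) (hs : 0 < s) (r : ℕ) : 1 ≤ cFun α s r := by
  unfold cFun; split <;> omega

/-- the strip of boxes with value `v`. -/
def B (α : List ℕ) (T : ℕ × ℕ → ℕ) (v : ℕ) : Finset (ℕ × ℕ) :=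
  (cdFinset α).filter fun p => T p = v

/-- the set of rows whose first box has value `v`. -/
def fiber (α : List ℕ) (T : ℕ × ℕ → ℕ) (v : ℕ) : Finset ℕ :=
  (Finset.Icc 1 α.length).filter fun r => T (r,1) = v

/-- values appearing in the first column. -/
def colC (α : List ℕ) (T : ℕ × ℕ → ℕ) : Finset ℕ :=
  (Finset.Icc 1 α.length).image fun r => T (r,1)

section main
variable (s m : ℕ) (α : List ℕ) (T : ℕ × ℕ → ℕ)

lemma ht_eq_h0 (hs : 0 < s) (hα : ∀ x ∈ α, 0 < x) (hT : IsBSTDIF α m s T) :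
    htBSTDIF α m T = α.length - (cutSet α s).card := by
  obtain ⟨hT1, hT2, hT3, hT4, hT5⟩ := hT
  set ℓ := α.length with hℓ
  -- row lengths are positive
  have hαpos : ∀ r, 1 ≤ r → r ≤ ℓ → 1 ≤ α.getD (r-1) 0 := by
    intro r h1 h2
    have hlt : r - 1 < α.length := by omega
    rw [List.getD_eq_getElem α 0 hlt]
    exact hα _ (List.getElem_mem hlt)
  have hrow1 : ∀ r, 1 ≤ r → r ≤ ℓ → (r, 1) ∈ cdFinset α := by
    intro r h1 h2
    rw [mem_cdFinset]
    exact ⟨h1, h2, le_refl 1, hαpos r h1 h2⟩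
  -- the strip of value v
  have hBmem : ∀ v p, p ∈ B α T v ↔ p ∈ cdFinset α ∧ T p = v := by
    intro v p; simp [B, Finset.mem_filter]
  have hBcard : ∀ v, 1 ≤ v → v ≤ m → (B α T v).card = s := fun v h1 h2 => (hT5 v h1 h2).1
  have hBstrip : ∀ v, 1 ≤ v → v ≤ m → IsBorderStripDIF α (B α T v) :=
    fun v h1 h2 => (hT5 v h1 h2).2
  -- one-row lemma
  have hOneRow : ∀ v, 1 ≤ v → v ≤ m → ∀ p ∈ B α T v, (p.1, 1) ∉ B α T v →
      ∀ q ∈ B α T v, q.1 = p.1 := by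
    intro v h1 h2 p hp hnp q hq
    obtain ⟨hsub, hne, hcase⟩ := hBstrip v h1 h2
    rcases hcase with ⟨i, a, b, hEq⟩ | ⟨i₁, i₂, h12, hbnd, hcol, hleft⟩
    · have hfst : ∀ x ∈ B α T v, x.1 = i := by
        intro x hx
        rw [hEq, Finset.mem_image] at hx
        obtain ⟨j, _, rfl⟩ := hx
        rfl
      rw [hfst q hq, hfst p hp]
    · exact absurd (hcol p.1 (hbnd p hp).1 (hbnd p hp).2) hnp
  have hColStrip : ∀ v, 1 ≤ v → v ≤ m → ∀ r, (r, 1) ∈ B α T v → ∀ p ∈ B α T v, (p.1, 1) ∈ B α T v := by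
    intro v h1 h2 r hr p hp
    obtain ⟨hsub, hne, hcase⟩ := hBstrip v h1 h2
    rcases hcase with ⟨i, a, b, hEq⟩ | ⟨i₁, i₂, h12, hbnd, hcol, hleft⟩
    · have hr' := hr
      rw [hEq, Finset.mem_image] at hr'
      obtain ⟨j, hj, hji⟩ := hr'
      have hji1 : i = r ∧ j = 1 := Prod.mk.injEq .. ▸ hji
      have hpi : p.1 = i := by
        have hp' := hp
        rw [hEq, Finset.mem_image] at hp'
        obtain ⟨j', _, rfl⟩ := hp'
        rfl
      rw [hpi, hji1.1]
      exact hji1.2 ▸ hr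
    · exact hcol p.1 (hbnd p hp).1 (hbnd p hp).2
  -- values of column boxes
  have hw_mem : ∀ r, 1 ≤ r → r ≤ ℓ → 1 ≤ T (r,1) ∧ T (r,1) ≤ m := by
    intro r h1 h2; exact hT1 _ (hrow1 r h1 h2)
  -- fibers
  have hfibmem : ∀ v r, r ∈ fiber α T v ↔ (1 ≤ r ∧ r ≤ ℓ) ∧ T (r,1) = v := by
    intro v r; simp [fiber, Finset.mem_filter, Finset.mem_Icc, hℓ]
  -- the prefix-length computation
  have hc : ∀ r, 1 ≤ r → r ≤ ℓ → ((B α T (T (r,1))).filter fun p => p.1 = r).card = cFun α s r := by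
    intro r h1 h2
    set v := T (r,1) with hv
    have hvm := hw_mem r h1 h2
    set rowSet : Finset (ℕ×ℕ) := (cdFinset α).filter (fun p => p.1 = r) with hrow
    have hrowmem : ∀ p, p ∈ rowSet ↔ p ∈ cdFinset α ∧ p.1 = r := by
      intro p; simp [hrow]
    have hrowSet_eq : rowSet = (Finset.Icc 1 (α.getD (r-1) 0)).image fun j => (r, j) := by
      ext p
      rw [hrowmem, Finset.mem_image]
      constructor
      · rintro ⟨hcd, hr⟩
        obtain ⟨i, j⟩ := p
        simp only at hr
        subst hr
        rw [mem_cdFinset] at hcd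
        exact ⟨j, Finset.mem_Icc.mpr ⟨hcd.2.2.1, hcd.2.2.2⟩, rfl⟩
      · rintro ⟨j, hj, rfl⟩
        rw [Finset.mem_Icc] at hj
        exact ⟨(mem_cdFinset α r j).mpr ⟨h1, h2, hj.1, hj.2⟩, rfl⟩
    have hinj : Function.Injective (fun j => ((r, j) : ℕ × ℕ)) := by
      intro a b h
      exact (Prod.mk.injEq .. ▸ h).2
    have hrowcard : rowSet.card = α.getD (r-1) 0 := by
      rw [hrowSet_eq, Finset.card_image_of_injective _ hinj, Nat.card_Icc]
      omega
    have hvrow : v ∈ rowSet.image T := by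
      refine Finset.mem_image.mpr ⟨(r,1), ?_, rfl⟩
      rw [hrowmem]
      exact ⟨hrow1 r h1 h2, rfl⟩
    have hpart := Finset.card_eq_sum_card_image T rowSet
    have hother : ∀ u ∈ rowSet.image T, u ≠ v → (rowSet.filter fun p => T p = u) = B α T u := by
      intro u hu hne
      obtain ⟨p, hp, rfl⟩ := Finset.mem_image.mp hu
      rw [hrowmem] at hp
      have hum := hT1 p hp.1
      have hpB : p ∈ B α T (T p) := (hBmem _ p).mpr ⟨hp.1, rfl⟩
      have hr1 : (p.1, 1) ∉ B α T (T p) := by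
        intro hmem
        rw [hBmem] at hmem
        apply hne
        have h' : T (p.1, 1) = T p := hmem.2
        rw [hp.2] at h'
        rw [hv]
        exact h'.symm
      have hall := hOneRow (T p) hum.1 hum.2 p hpB hr1
      ext q
      rw [Finset.mem_filter, hrowmem, hBmem]
      constructor
      · rintro ⟨⟨hcd, _⟩, hTq⟩
        exact ⟨hcd, hTq⟩
      · rintro ⟨hcd, hTq⟩
        have hq : q ∈ B α T (T p) := (hBmem _ q).mpr ⟨hcd, hTq⟩
        exact ⟨⟨hcd, (hall q hq).trans hp.2⟩, hTq⟩
    have hveq : (rowSet.filter fun p => T p = v) = (B α T v).filter fun p => p.1 = r := by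
      ext q
      rw [Finset.mem_filter, hrowmem, Finset.mem_filter, hBmem]
      tauto
    set k := ((B α T v).filter fun p => p.1 = r).card with hk
    have hk1 : 1 ≤ k := by
      have hm : (r,1) ∈ (B α T v).filter fun p => p.1 = r := by
        rw [Finset.mem_filter, hBmem]
        exact ⟨⟨hrow1 r h1 h2, hv.symm⟩, rfl⟩
      rw [hk]
      exact Finset.card_pos.mpr ⟨_, hm⟩
    have hks : k ≤ s := by
      rw [hk, ← hBcard v hvm.1 hvm.2]
      exact Finset.card_le_card (Finset.filter_subset _ _)
    rw [← Finset.add_sum_erase _ _ hvrow] at hpart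
    have herase : ∀ u ∈ (rowSet.image T).erase v, (rowSet.filter fun p => T p = u).card = s := by
      intro u hu
      have hu' := Finset.mem_of_mem_erase hu
      have hne := Finset.ne_of_mem_erase hu
      rw [hother u hu' hne]
      obtain ⟨p, hp, rfl⟩ := Finset.mem_image.mp hu'
      have hum := hT1 p ((hrowmem p).mp hp).1
      exact hBcard _ hum.1 hum.2
    rw [Finset.sum_congr rfl herase, Finset.sum_const, smul_eq_mul] at hpart
    rw [hrowcard, hveq, ← hk] at hpart
    have hmod : α.getD (r-1) 0 % s = k % s := by
      rw [hpart, Nat.add_mul_mod_self_right]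
    unfold cFun
    split
    · next h =>
      have hdvd : s ∣ k := Nat.dvd_of_mod_eq_zero (by omega)
      have := Nat.le_of_dvd (by omega) hdvd
      omega
    · next h =>
      have hklt : k < s := by
        rcases Nat.lt_or_ge k s with h' | h'
        · exact h'
        · exfalso
          have hks' : k = s := by omega
          rw [hks', Nat.mod_self] at hmod
          omega
      rw [Nat.mod_eq_of_lt hklt] at hmod
      omega
  -- fiber sums
  have hfibersum : ∀ v, (∃ r, 1 ≤ r ∧ r ≤ ℓ ∧ T (r,1) = v) →
      ∑ r ∈ fiber α T v, cFun α s r = s := by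
    rintro v ⟨r₀, hr1, hr2, hr3⟩
    have hvm : 1 ≤ v ∧ v ≤ m := hr3 ▸ hw_mem r₀ hr1 hr2
    have hr0B : (r₀, 1) ∈ B α T v := (hBmem _ _).mpr ⟨hrow1 r₀ hr1 hr2, hr3⟩
    have hUnion : B α T v = (fiber α T v).biUnion (fun r => (B α T v).filter fun p => p.1 = r) := by
      ext p
      rw [Finset.mem_biUnion]
      constructor
      · intro hp
        have h1 := hColStrip v hvm.1 hvm.2 r₀ hr0B p hp
        have h1' := (hBmem _ _).mp h1
        have hcd := (mem_cdFinset α p.1 1).mp h1'.1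
        exact ⟨p.1, (hfibmem _ _).mpr ⟨⟨hcd.1, hcd.2.1⟩, h1'.2⟩, Finset.mem_filter.mpr ⟨hp, rfl⟩⟩
      · rintro ⟨r, _, hp⟩
        exact (Finset.mem_filter.mp hp).1
    have hdisj : ∀ x ∈ fiber α T v, ∀ y ∈ fiber α T v, x ≠ y →
        Disjoint ((B α T v).filter fun p => p.1 = x) ((B α T v).filter fun p => p.1 = y) := by
      intro x _ y _ hxy
      rw [Finset.disjoint_left]
      rintro p hpx hpy
      rw [Finset.mem_filter] at hpx hpy
      exact hxy (hpx.2.symm.trans hpy.2)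
    have hcards := congrArg Finset.card hUnion
    rw [Finset.card_biUnion hdisj, hBcard v hvm.1 hvm.2] at hcards
    conv_rhs => rw [hcards]
    apply Finset.sum_congr rfl
    intro r hr
    have hrf := (hfibmem v r).mp hr
    have h := hc r hrf.1.1 hrf.1.2
    rw [hrf.2] at h
    exact h.symm
  -- column values
  have hCsub : colC α T ⊆ Finset.Icc 1 m := by
    intro v hv
    rw [colC, Finset.mem_image, ← hℓ] at hv
    obtain ⟨r, hr, rfl⟩ := hv
    rw [Finset.mem_Icc] at hr ⊢
    exact hw_mem r hr.1 hr.2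
  have hrows_col : ∀ v ∈ colC α T, (B α T v).image Prod.fst = fiber α T v := by
    intro v hv
    rw [colC, Finset.mem_image] at hv
    obtain ⟨r₀, hr₀, rfl⟩ := hv
    rw [Finset.mem_Icc, ← hℓ] at hr₀
    have hvm := hw_mem r₀ hr₀.1 hr₀.2
    have hr0B : (r₀,1) ∈ B α T (T (r₀,1)) := (hBmem _ _).mpr ⟨hrow1 r₀ hr₀.1 hr₀.2, rfl⟩
    ext r
    rw [Finset.mem_image, hfibmem]
    constructor
    · rintro ⟨p, hp, rfl⟩
      have h1 := hColStrip _ hvm.1 hvm.2 r₀ hr0B p hp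
      have h1' := (hBmem _ _).mp h1
      have hcd := (mem_cdFinset α p.1 1).mp h1'.1
      exact ⟨⟨hcd.1, hcd.2.1⟩, h1'.2⟩
    · rintro ⟨⟨ha, hb⟩, hTr⟩
      exact ⟨(r,1), (hBmem _ _).mpr ⟨hrow1 r ha hb, hTr⟩, rfl⟩
  have hrows_notcol : ∀ v ∈ Finset.Icc 1 m, v ∉ colC α T → ((B α T v).image Prod.fst).card = 1 := by
    intro v hv hvC
    rw [Finset.mem_Icc] at hv
    have hne : (B α T v).Nonempty := by
      rw [← Finset.card_pos, hBcard v hv.1 hv.2]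
      exact hs
    obtain ⟨p, hp⟩ := hne
    have hnp : (p.1, 1) ∉ B α T v := by
      intro hmem
      apply hvC
      have h' := (hBmem _ _).mp hmem
      have hcd := (mem_cdFinset α p.1 1).mp h'.1
      rw [colC]
      exact Finset.mem_image.mpr ⟨p.1, Finset.mem_Icc.mpr ⟨hcd.1, hcd.2.1⟩, h'.2⟩
    have hall := hOneRow v hv.1 hv.2 p hp hnp
    have himg : (B α T v).image Prod.fst = {p.1} := by
      ext x
      rw [Finset.mem_image, Finset.mem_singleton]
      constructor
      · rintro ⟨q, hq, rfl⟩
        exact hall q hq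
      · rintro rfl
        exact ⟨p, hp, rfl⟩
    rw [himg, Finset.card_singleton]
  -- height = ℓ - (colC α T).card
  have hht : htBSTDIF α m T = ℓ - (colC α T).card := by
    have hsplit : htBSTDIF α m T = ∑ v ∈ colC α T, ((fiber α T v).card - 1) := by
      have h0 : ∀ v ∈ Finset.Icc 1 m, v ∉ colC α T →
          (((B α T v).image Prod.fst).card - 1) = 0 := by
        intro v hv hvC
        rw [hrows_notcol v hv hvC]
      calc htBSTDIF α m T
          = ∑ v ∈ Finset.Icc 1 m, (((B α T v).image Prod.fst).card - 1) := rfl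
        _ = ∑ v ∈ colC α T, (((B α T v).image Prod.fst).card - 1) :=
            (Finset.sum_subset hCsub h0).symm
        _ = ∑ v ∈ colC α T, ((fiber α T v).card - 1) :=
            Finset.sum_congr rfl (fun v hv => by rw [hrows_col v hv])
    have hsum : ∑ v ∈ colC α T, (fiber α T v).card = ℓ := by
      calc ∑ v ∈ colC α T, (fiber α T v).card
          = ∑ v ∈ (Finset.Icc 1 ℓ).image (fun r => T (r,1)),
              ((Finset.Icc 1 ℓ).filter fun a => (fun r => T (r,1)) a = v).card := rfl
        _ = (Finset.Icc 1 ℓ).card := (Finset.card_eq_sum_card_image _ _).symm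
        _ = ℓ := by rw [Nat.card_Icc]; omega
    have hpos : ∀ v ∈ colC α T, 1 ≤ (fiber α T v).card := by
      intro v hv
      rw [colC, Finset.mem_image] at hv
      obtain ⟨r, hr, rfl⟩ := hv
      rw [Finset.mem_Icc] at hr
      refine Finset.card_pos.mpr ⟨r, ?_⟩
      rw [hfibmem]
      exact ⟨⟨hr.1, by omega⟩, rfl⟩
    have hadd : ∑ v ∈ colC α T, ((fiber α T v).card - 1) + (colC α T).card = ℓ := by
      rw [Finset.card_eq_sum_ones (colC α T), ← Finset.sum_add_distrib, ← hsum]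
      apply Finset.sum_congr rfl
      intro v hv
      have := hpos v hv
      omega
    rw [hsplit]
    omega
  -- (colC α T).card = cutSet card
  have hmono : ∀ r r', 1 ≤ r → r ≤ r' → r' ≤ ℓ → T (r,1) ≤ T (r',1) := by
    intro r r' h1 h2 h3
    exact hT4 r r' h2 (hrow1 r h1 (le_trans h2 h3)) (hrow1 r' (le_trans h1 h2) h3)
  have hcut : ∀ r, 1 ≤ r → r ≤ ℓ →
      ((s ∣ ∑ i ∈ Finset.Icc 1 r, cFun α s i) ↔ ∀ r' ∈ fiber α T (T (r,1)), r' ≤ r) := by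
    intro r h1 h2
    set v := T (r,1) with hv
    set A : Finset ℕ := (Finset.Icc 1 ℓ).filter (fun i => T (i,1) < v) with hA
    set D : Finset ℕ := (Finset.Icc 1 r).filter (fun i => T (i,1) = v) with hD
    have hAmem : ∀ i, i ∈ A ↔ (1 ≤ i ∧ i ≤ ℓ) ∧ T (i,1) < v := by
      intro i
      simp [hA, Finset.mem_filter, Finset.mem_Icc]
    have hDmem : ∀ i, i ∈ D ↔ (1 ≤ i ∧ i ≤ r) ∧ T (i,1) = v := by
      intro i
      simp [hD, Finset.mem_filter, Finset.mem_Icc]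
    have hsub : Finset.Icc 1 r = A ∪ D := by
      ext i
      rw [Finset.mem_union, hAmem, hDmem, Finset.mem_Icc]
      constructor
      · intro hi
        have hle : T (i,1) ≤ v := hmono i r hi.1 hi.2 h2
        rcases lt_or_eq_of_le hle with h | h
        · exact Or.inl ⟨⟨hi.1, le_trans hi.2 h2⟩, h⟩
        · exact Or.inr ⟨hi, h⟩
      · rintro (⟨⟨hi1, hi2⟩, hlt⟩ | ⟨hi, _⟩)
        · refine ⟨hi1, ?_⟩
          by_contra hgt
          push_neg at hgt
          have := hmono r i h1 (le_of_lt hgt) hi2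
          omega
        · exact hi
    have hdisj : Disjoint A D := by
      rw [Finset.disjoint_left]
      intro i hiA hiD
      rw [hAmem] at hiA
      rw [hDmem] at hiD
      omega
    have hS : ∑ i ∈ Finset.Icc 1 r, cFun α s i
        = (∑ i ∈ A, cFun α s i) + ∑ i ∈ D, cFun α s i := by
      rw [hsub, Finset.sum_union hdisj]
    have hAsum : s ∣ ∑ i ∈ A, cFun α s i := by
      have hAunion : A = ((A.image (fun i => T (i,1)))).biUnion (fun u => fiber α T u) := by
        ext i
        simp only [Finset.mem_biUnion, Finset.mem_image]
        constructor
        · intro hi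
          have hi' := (hAmem i).mp hi
          exact ⟨T (i,1), ⟨i, hi, rfl⟩, (hfibmem _ _).mpr ⟨hi'.1, rfl⟩⟩
        · rintro ⟨u, ⟨i', hi', rfl⟩, hif⟩
          have hif' := (hfibmem _ _).mp hif
          have hi'' := (hAmem i').mp hi'
          exact (hAmem i).mpr ⟨hif'.1, lt_of_le_of_lt (le_of_eq hif'.2) hi''.2⟩
      have hfdisj : Set.PairwiseDisjoint ↑(A.image (fun i => T (i,1))) (fun u => fiber α T u) := by
        intro x _ y _ hxy
        rw [Function.onFun, Finset.disjoint_left]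
        intro i hix hiy
        exact hxy (((hfibmem x i).mp hix).2.symm.trans ((hfibmem y i).mp hiy).2)
      rw [hAunion, Finset.sum_biUnion hfdisj]
      apply Finset.dvd_sum
      intro u hu
      obtain ⟨i', hi', rfl⟩ := Finset.mem_image.mp hu
      have hi'' := (hAmem i').mp hi'
      rw [hfibersum _ ⟨i', hi''.1.1, hi''.1.2, rfl⟩]
    have hDfib : D ⊆ fiber α T v := by
      intro i hi
      have h' := (hDmem i).mp hi
      exact (hfibmem _ _).mpr ⟨⟨h'.1.1, le_trans h'.1.2 h2⟩, h'.2⟩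
    have hrD : r ∈ D := (hDmem r).mpr ⟨⟨h1, le_refl r⟩, rfl⟩
    have hq_le : ∑ i ∈ D, cFun α s i ≤ s :=
      le_trans (Finset.sum_le_sum_of_subset hDfib)
        (le_of_eq (hfibersum v ⟨r, h1, h2, hv.symm⟩))
    have hq_pos : 1 ≤ ∑ i ∈ D, cFun α s i :=
      le_trans (cFun_pos α s hs r) (Finset.single_le_sum (fun i _ => Nat.zero_le _) hrD)
    constructor
    · intro hdvd
      have hdq : s ∣ ∑ i ∈ D, cFun α s i := by
        rw [hS] at hdvd
        exact (Nat.dvd_add_right hAsum).mp hdvd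
      have hq : ∑ i ∈ D, cFun α s i = s :=
        le_antisymm hq_le (Nat.le_of_dvd (by omega) hdq)
      have hDeq : D = fiber α T v := by
        by_contra hne
        have hss : D ⊂ fiber α T v := Finset.ssubset_iff_subset_ne.mpr ⟨hDfib, hne⟩
        obtain ⟨i0, hi0f, hi0D⟩ := Finset.exists_of_ssubset hss
        have hlt : ∑ i ∈ D, cFun α s i < ∑ i ∈ fiber α T v, cFun α s i :=
          Finset.sum_lt_sum_of_subset hDfib hi0f hi0D (cFun_pos α s hs i0)
            (fun j _ _ => Nat.zero_le _)
        rw [hq, hfibersum v ⟨r, h1, h2, hv.symm⟩] at hlt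
        omega
      intro r' hr'
      rw [← hDeq] at hr'
      exact ((hDmem r').mp hr').1.2
    · intro hall
      have hDeq : D = fiber α T v := by
        apply Finset.Subset.antisymm hDfib
        intro i hi
        have hif := (hfibmem _ _).mp hi
        refine (hDmem i).mpr ⟨⟨hif.1.1, ?_⟩, hif.2⟩
        exact hall i hi
      rw [hS, hDeq, hfibersum v ⟨r, h1, h2, hv.symm⟩]
      exact Nat.dvd_add hAsum dvd_rfl
  have hfibne : ∀ v ∈ colC α T, (fiber α T v).Nonempty := by
    intro v hv
    rw [colC, Finset.mem_image] at hv
    obtain ⟨r, hr, rfl⟩ := hv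
    rw [Finset.mem_Icc] at hr
    exact ⟨r, (hfibmem _ _).mpr ⟨⟨hr.1, by omega⟩, rfl⟩⟩
  have hCcard : (colC α T).card = (cutSet α s).card := by
    refine Finset.card_bij (fun v hv => (fiber α T v).max' (hfibne v hv)) ?_ ?_ ?_
    · intro v hv
      beta_reduce
      have hmax := Finset.max'_mem (fiber α T v) (hfibne v hv)
      have hmf := (hfibmem _ _).mp hmax
      rw [cutSet, Finset.mem_filter, Finset.mem_Icc]
      refine ⟨⟨hmf.1.1, by omega⟩, ?_⟩
      refine (hcut _ hmf.1.1 hmf.1.2).mpr ?_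
      intro r' hr'
      rw [hmf.2] at hr'
      exact Finset.le_max' _ r' hr'
    · intro v₁ hv₁ v₂ hv₂ heq
      beta_reduce at heq
      have h₁ := (hfibmem _ _).mp (Finset.max'_mem _ (hfibne v₁ hv₁))
      have h₂ := (hfibmem _ _).mp (Finset.max'_mem _ (hfibne v₂ hv₂))
      rw [← h₁.2, ← h₂.2, heq]
    · intro r hr
      rw [cutSet, Finset.mem_filter, Finset.mem_Icc] at hr
      have hr1 : 1 ≤ r := hr.1.1
      have hr2 : r ≤ ℓ := by
        have := hr.1.2
        omega
      have hmemC : T (r,1) ∈ colC α T := by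
        rw [colC, Finset.mem_image]
        exact ⟨r, Finset.mem_Icc.mpr ⟨hr1, by omega⟩, rfl⟩
      refine ⟨T (r,1), hmemC, ?_⟩
      beta_reduce
      apply le_antisymm
      · apply Finset.max'_le
        intro y hy
        exact (hcut r hr1 hr2).mp hr.2 y hy
      · exact Finset.le_max' _ r ((hfibmem _ _).mpr ⟨⟨hr1, hr2⟩, rfl⟩)
  rw [hht, hCcard]

end main

/-- For `α ⊨ ms`, all border strip tableaux of shape `α` and type `(s^m)` (dual
immaculate case) have the same height parity, and consequently
`d_{α,(s^m)} = Σ_T (−1)^{ht(T)} = ε · |BST_{𝔘_α}((s^m))|` where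
`ε = (−1)^{ht(T)}` for any `T` in the set. -/
theorem bst_height_parity_constant (s m : ℕ) (hs : 0 < s) (hm : 0 < m)
    (α : List ℕ) (hα : ∀ x ∈ α, 0 < x) (hsum : α.sum = m * s) :
    (∀ T T' : ℕ × ℕ → ℕ, IsBSTDIF α m s T → IsBSTDIF α m s T' →
      ((-1 : ℤ)) ^ htBSTDIF α m T = (-1 : ℤ) ^ htBSTDIF α m T') ∧
    ∃ ε : ℤ,
      (∀ T : ℕ × ℕ → ℕ, IsBSTDIF α m s T → ((-1 : ℤ)) ^ htBSTDIF α m T = ε) ∧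
      ∑ᶠ T ∈ {T : ℕ × ℕ → ℕ | IsBSTDIF α m s T}, ((-1 : ℤ)) ^ htBSTDIF α m T =
        ε * ({T : ℕ × ℕ → ℕ | IsBSTDIF α m s T}.ncard : ℤ) := by
  have key : ∀ T : ℕ × ℕ → ℕ, IsBSTDIF α m s T →
      htBSTDIF α m T = α.length - (cutSet α s).card :=
    fun T hT => ht_eq_h0 s m α T hs hα hT
  constructor
  · intro T T' hT hT'
    rw [key T hT, key T' hT']
  · refine ⟨(-1 : ℤ) ^ (α.length - (cutSet α s).card),
      fun T hT => by rw [key T hT], ?_⟩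
    set S := {T : ℕ × ℕ → ℕ | IsBSTDIF α m s T} with hSdef
    have hres : Set.InjOn (fun T (p : {p // p ∈ cdFinset α}) => T p.1) S := by
      intro T hT T' hT' hEq
      funext p
      by_cases hp : p ∈ cdFinset α
      · exact congrFun hEq ⟨p, hp⟩
      · rw [hT.2.1 p hp, hT'.2.1 p hp]
    have hfin : S.Finite := by
      apply Set.Finite.of_finite_image ?_ hres
      apply Set.Finite.subset
        (Set.Finite.pi (fun _ : {p // p ∈ cdFinset α} => Set.finite_Iic m))
      rintro f ⟨T, hT, rfl⟩
      rw [Set.mem_pi]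
      intro p _
      exact (hT.1 p.1 p.2).2
    rw [finsum_mem_eq_finite_toFinset_sum _ hfin]
    have hcongr : ∀ T ∈ hfin.toFinset,
        (-1:ℤ)^htBSTDIF α m T = (-1:ℤ)^(α.length - (cutSet α s).card) := by
      intro T hT
      rw [key T (hfin.mem_toFinset.mp hT)]
    rw [Finset.sum_congr rfl hcongr, Finset.sum_const,
      Set.ncard_eq_toFinset_card S hfin, nsmul_eq_mul, mul_comm]
end
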